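/- With γ = 1 − α/[W⁻¹ P e_j]_j, the point γ e_j satisfies the first-order optimality condition of J(x) = ½‖P x − P e_j‖₂² + α‖W x‖₁: namely (1/α) W⁻¹ P(e_j − γ e_j) lies in the subdifferential of the ℓ¹ norm at W(γ e_j). -/

import Mathlib

open Matrix Finset

noncomputable def euclNorm {n : ℕ} (v : Fin n → ℝ) : ℝ := Real.sqrt (∑ i, v i ^ 2)

noncomputable def wInvP {n : ℕ} (P : Matrix (Fin n) (Fin n) ℝ) (j i : Fin n) : ℝ :=
  P.mulVec (Pi.single j 1) i / euclNorm (P.mulVec (Pi.single i 1))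

/-!
Write `p i = P e_i` for the columns of the orthogonal projection `P`. Since `P = Pᵀ P`, every
entry is a Gram entry, `P i j = ⟪p i, p j⟫`. In particular `[W⁻¹ P e_j]_j = ‖p j‖²/‖p j‖ = ‖p j‖`,
so at `i = j` the scaled residual `(1/α) W⁻¹ P (1 - γ) e_j` equals `1 = sign(γ ‖p j‖)`, while at
`i ≠ j` it equals `⟪p i, p j⟫ / (‖p i‖ ‖p j‖)`, which lies in `[-1, 1]` by Cauchy–Schwarz.
-/

theorem euclNorm_nonneg {n : ℕ} (v : Fin n → ℝ) : 0 ≤ euclNorm v :=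
  Real.sqrt_nonneg _

theorem abs_sum_mul_le_euclNorm_mul {n : ℕ} (u v : Fin n → ℝ) :
    |∑ k, u k * v k| ≤ euclNorm u * euclNorm v := by
  refine abs_le.mpr ⟨?_, Real.sum_mul_le_sqrt_mul_sqrt _ u v⟩
  have := Real.sum_mul_le_sqrt_mul_sqrt univ (-u) v
  simp only [Pi.neg_apply, neg_mul, sum_neg_distrib, neg_sq] at this
  exact neg_le_of_neg_le this

section Projection

variable {n : ℕ} {P : Matrix (Fin n) (Fin n) ℝ}

theorem Matrix.apply_eq_sum_col_mul_col (hsymm : Pᵀ = P) (hidem : P * P = P) (i j : Fin n) :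
    P i j = ∑ k, P.col i k * P.col j k := by
  conv_lhs => rw [← hidem, ← congrArg (· * P) hsymm]
  simp [Matrix.mul_apply]

theorem Matrix.apply_self_eq_sum_sq (hsymm : Pᵀ = P) (hidem : P * P = P) (j : Fin n) :
    P j j = ∑ k, P.col j k ^ 2 := by
  simp [Matrix.apply_eq_sum_col_mul_col hsymm hidem j j, sq]

theorem wInvP_self (hsymm : Pᵀ = P) (hidem : P * P = P) (j : Fin n) :
    wInvP P j j = euclNorm (P *ᵥ Pi.single j 1) := by
  rw [wInvP, mulVec_single_one, col_apply, Matrix.apply_self_eq_sum_sq hsymm hidem, euclNorm,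
    Real.div_sqrt]

theorem Matrix.apply_self_eq_wInvP_mul_self (hsymm : Pᵀ = P) (hidem : P * P = P) (j : Fin n) :
    P j j = wInvP P j j * wInvP P j j := by
  rw [wInvP_self hsymm hidem, euclNorm, Real.mul_self_sqrt (sum_nonneg fun _ _ => sq_nonneg _),
    Matrix.apply_self_eq_sum_sq hsymm hidem, mulVec_single_one]

theorem Matrix.abs_apply_le_euclNorm_mul (hsymm : Pᵀ = P) (hidem : P * P = P) (i j : Fin n) :
    |P i j| ≤ euclNorm (P *ᵥ Pi.single i 1) * euclNorm (P *ᵥ Pi.single j 1) := by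
  rw [Matrix.apply_eq_sum_col_mul_col hsymm hidem, mulVec_single_one, mulVec_single_one]
  exact abs_sum_mul_le_euclNorm_mul _ _

end Projection

theorem first_order_optimality_general {n : ℕ}
    (P : Matrix (Fin n) (Fin n) ℝ) (hsymm : Pᵀ = P) (hidem : P * P = P)
    (j : Fin n)
    (α : ℝ) (hα0 : 0 < α) (hα1 : α < wInvP P j j) :
    ∀ i : Fin n,
      (((1 - α / wInvP P j j) • (Pi.single j 1 : Fin n → ℝ)) i ≠ 0 →
        (1 / α) * (P.mulVec ((Pi.single j 1 : Fin n → ℝ) -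
            (1 - α / wInvP P j j) • (Pi.single j 1 : Fin n → ℝ)) i /
              euclNorm (P.mulVec (Pi.single i 1))) =
          Real.sign ((euclNorm (P.mulVec (Pi.single i 1))) *
            (((1 - α / wInvP P j j) • (Pi.single j 1 : Fin n → ℝ)) i))) ∧
      (((1 - α / wInvP P j j) • (Pi.single j 1 : Fin n → ℝ)) i = 0 →
        (1 / α) * (P.mulVec ((Pi.single j 1 : Fin n → ℝ) -
            (1 - α / wInvP P j j) • (Pi.single j 1 : Fin n → ℝ)) i /
              euclNorm (P.mulVec (Pi.single i 1))) ∈ Set.Icc (-1 : ℝ) 1) := by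
  set w := wInvP P j j
  have hw : 0 < w := hα0.trans hα1
  have hγ : 0 < 1 - α / w := sub_pos.mpr ((div_lt_one hw).mpr hα1)
  have hresidual : ∀ i, (1 / α) * ((P *ᵥ (Pi.single j 1 - (1 - α / w) • Pi.single j 1)) i /
      euclNorm (P *ᵥ Pi.single i 1)) = P i j / (euclNorm (P *ᵥ Pi.single i 1) * w) := by
    intro i
    simp only [mulVec_sub, mulVec_smul, Pi.sub_apply, Pi.smul_apply, mulVec_single_one, col_apply,
      smul_eq_mul]
    field_simp
    ring
  intro i
  rw [hresidual]
  rcases eq_or_ne i j with rfl | hij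
  · have hnorm : euclNorm (P *ᵥ Pi.single i 1) = w := (wInvP_self hsymm hidem i).symm
    simp only [Pi.smul_apply, Pi.single_eq_same, smul_eq_mul, mul_one, hnorm]
    refine ⟨fun _ => ?_, fun h => absurd h hγ.ne'⟩
    rw [Real.sign_of_pos (mul_pos hw hγ), Matrix.apply_self_eq_wInvP_mul_self hsymm hidem,
      div_self (mul_pos hw hw).ne']
  · refine ⟨fun h => absurd (by simp [Pi.single_eq_of_ne hij]) h, fun _ => ?_⟩
    have hcs := Matrix.abs_apply_le_euclNorm_mul hsymm hidem i j
    rw [← wInvP_self hsymm hidem j] at hcs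
    have hden : 0 ≤ euclNorm (P *ᵥ Pi.single i 1) * w := mul_nonneg (euclNorm_nonneg _) hw.le
    rw [Set.mem_Icc, ← abs_le, abs_div, abs_of_nonneg hden]
    exact div_le_one_of_le₀ hcs hden

/-- With `γ = 1 − α/[W⁻¹ P e_j]_j`, the point `γ • e_j` satisfies the first-order
optimality condition: `(1/α) W⁻¹ P (e_j − γ e_j)` lies in the subdifferential of the ℓ¹-norm at
`W (γ e_j)` (componentwise: equal to the sign where the component is nonzero, in `[−1,1]` where it
vanishes). -/
theorem first_order_optimality {n : ℕ}
    (P : Matrix (Fin n) (Fin n) ℝ) (hsymm : Pᵀ = P) (hidem : P * P = P)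
    (hnz : ∀ i : Fin n, P.mulVec (Pi.single i 1) ≠ 0)
    (j : Fin n)
    (hpar : ∀ i : Fin n, i ≠ j → ∀ c : ℝ,
      P.mulVec (Pi.single j 1) ≠ c • P.mulVec (Pi.single i 1))
    (α : ℝ) (hα0 : 0 < α) (hα1 : α < wInvP P j j) :
    ∀ i : Fin n,
      (((1 - α / wInvP P j j) • (Pi.single j 1 : Fin n → ℝ)) i ≠ 0 →
        (1 / α) * (P.mulVec ((Pi.single j 1 : Fin n → ℝ) -
            (1 - α / wInvP P j j) • (Pi.single j 1 : Fin n → ℝ)) i /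
              euclNorm (P.mulVec (Pi.single i 1))) =
          Real.sign ((euclNorm (P.mulVec (Pi.single i 1))) *
            (((1 - α / wInvP P j j) • (Pi.single j 1 : Fin n → ℝ)) i))) ∧
      (((1 - α / wInvP P j j) • (Pi.single j 1 : Fin n → ℝ)) i = 0 →
        (1 / α) * (P.mulVec ((Pi.single j 1 : Fin n → ℝ) -
            (1 - α / wInvP P j j) • (Pi.single j 1 : Fin n → ℝ)) i /
              euclNorm (P.mulVec (Pi.single i 1))) ∈ Set.Icc (-1 : ℝ) 1) :=
  first_order_optimality_general P hsymm hidem j α hα0 hα1
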